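/- Let A be a nonnegative tensor of order m and dimension n such that a_{i i₂ ⋯ i_m} = 0 whenever the indices i₂,…,i_m are not all equal. Then for every positive integer r, the zero pattern of M(A^r) equals the zero pattern of the matrix power (M(A))^r; i.e., M(A^r)_{ij} > 0 if and only if ((M(A))^r)_{ij} > 0 for all i, j ∈ [n]. -/

import Mathlib

/-! Since `A` vanishes off constant index tuples, only the tuples `(v, …, v)` survive in the
Shao product, so `M(A^{k+1})_{uj} = Σ_v M(A)_{uv} M(A^k)_{vj}^{m-1}`. For nonnegative entries this
sum is positive exactly when some `M(A)_{uv}` and `M(A^k)_{vj}` are both positive, which is also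
when `(M(A) M(A)^k)_{uj}` is positive; induction on `k` finishes. -/

open Finset

/- An order-`m` dimension-`n` nonnegative tensor is encoded as
`A : Fin n → (Fin (m-1) → Fin n) → ℝ`, with `A i t = a_{i t₁ ⋯ t_{m-1}}`. -/

/-- The majorization matrix `M(A)_{ij} = a_{ij⋯j}`. -/
def maj (n m : ℕ) (A : Fin n → (Fin (m-1) → Fin n) → ℝ) :
    Matrix (Fin n) (Fin n) ℝ :=
  fun i j => A i (fun _ => j)

/-- The majorization matrices of the Shao-product powers of `A`:
`majPow n m A k = M(A^k)`, via the recursion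
`M(A^{k+1})_{uj} = Σ_{j₂,…,j_m} a_{u j₂ ⋯ j_m} M(A^k)_{j₂ j} ⋯ M(A^k)_{j_m j}`
(with `M(A^0)` the identity, so that `majPow n m A 1 = maj n m A`). -/
def majPow (n m : ℕ) (A : Fin n → (Fin (m-1) → Fin n) → ℝ) :
    ℕ → Matrix (Fin n) (Fin n) ℝ
  | 0 => 1
  | k + 1 => fun u j =>
      ∑ t : Fin (m-1) → Fin n, A u t * ∏ i, majPow n m A k (t i) j

def Primitive (n m : ℕ) (A : Fin n → (Fin (m-1) → Fin n) → ℝ) : Prop :=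
  ∃ r, 0 < r ∧ ∀ u j, 0 < majPow n m A r u j

lemma sum_mul_pos_iff_of_nonneg {ι : Type*} [Fintype ι] {a b : ι → ℝ} (ha : ∀ i, 0 ≤ a i)
    (hb : ∀ i, 0 ≤ b i) : 0 < ∑ i, a i * b i ↔ ∃ i, 0 < a i ∧ 0 < b i := by
  rw [sum_pos_iff_of_nonneg fun i _ => mul_nonneg (ha i) (hb i)]
  simp only [mem_univ, true_and]
  refine exists_congr fun i => ⟨fun h => ?_, fun h => mul_pos h.1 h.2⟩
  exact (mul_pos_iff.mp h).resolve_right fun h' => (ha i).not_gt h'.1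

section
variable {n m : ℕ} {A : Fin n → (Fin (m-1) → Fin n) → ℝ}

lemma majPow_nonneg (hA : ∀ u t, 0 ≤ A u t) (k : ℕ) (u j : Fin n) :
    0 ≤ majPow n m A k u j := by
  induction k generalizing u with
  | zero => by_cases h : u = j <;> simp [majPow, Matrix.one_apply, h]
  | succ k ih => exact sum_nonneg fun t _ => mul_nonneg (hA u t) (prod_nonneg fun i _ => ih (t i))

lemma majPow_succ_of_diag (hm : 2 ≤ m)
    (hdiag : ∀ (i : Fin n) (t : Fin (m-1) → Fin n),
      (¬ ∀ k k' : Fin (m-1), t k = t k') → A i t = 0) (k : ℕ) (u j : Fin n) :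
    majPow n m A (k + 1) u j = ∑ v, maj n m A u v * majPow n m A k v j ^ (m - 1) := by
  have : Nonempty (Fin (m - 1)) := ⟨⟨0, by omega⟩⟩
  calc majPow n m A (k + 1) u j
      = ∑ t ∈ univ.image (Function.const (Fin (m - 1))),
          A u t * ∏ i, majPow n m A k (t i) j := by
        refine (sum_subset (subset_univ _) fun t _ ht => ?_).symm
        rw [hdiag u t fun hconst => ht ?_, zero_mul]
        exact mem_image.mpr ⟨t (Classical.arbitrary _), mem_univ _, funext fun i => hconst _ _⟩
    _ = ∑ v, maj n m A u v * majPow n m A k v j ^ (m - 1) := by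
        rw [sum_image fun _ _ _ _ h => Function.const_injective h]
        simp only [Function.const_apply, prod_const, card_univ, Fintype.card_fin]
        rfl

theorem majPow_pos_iff_maj_pow_pos (hm : 2 ≤ m) (hA : ∀ u t, 0 ≤ A u t)
    (hdiag : ∀ (i : Fin n) (t : Fin (m-1) → Fin n),
      (¬ ∀ k k' : Fin (m-1), t k = t k') → A i t = 0) (k : ℕ) (u j : Fin n) :
    0 < majPow n m A k u j ↔ 0 < (maj n m A ^ k) u j := by
  induction k generalizing u with
  | zero => simp [majPow]
  | succ k ih =>
    have hmaj : ∀ u v, 0 ≤ maj n m A u v := fun u v => hA u _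
    rw [majPow_succ_of_diag hm hdiag, pow_succ', Matrix.mul_apply,
      sum_mul_pos_iff_of_nonneg (hmaj u) fun v => pow_nonneg (majPow_nonneg hA k v j) _,
      sum_mul_pos_iff_of_nonneg (hmaj u) fun v => Matrix.pow_apply_nonneg hmaj k v j]
    refine exists_congr fun v => and_congr_right' ?_
    have hv := majPow_nonneg hA k v j
    rw [← ih, (pow_nonneg hv _).lt_iff_ne', hv.lt_iff_ne', ne_eq, pow_eq_zero_iff (by omega)]

end

/-- if `a_{i i₂⋯i_m} = 0` unless `i₂ = ⋯ = i_m`, then the zero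
pattern of `M(A^r)` equals that of the ordinary matrix power `(M(A))^r`. -/
theorem stmt_14 (n m : ℕ) (hm : 2 ≤ m)
    (A : Fin n → (Fin (m-1) → Fin n) → ℝ) (hA : ∀ u t, 0 ≤ A u t)
    (hdiag : ∀ (i : Fin n) (t : Fin (m-1) → Fin n),
      (¬ ∀ k k' : Fin (m-1), t k = t k') → A i t = 0) :
    ∀ r : ℕ, 1 ≤ r → ∀ i j : Fin n,
      (0 < majPow n m A r i j ↔ 0 < ((maj n m A) ^ r) i j) :=
  fun r _ i j => majPow_pos_iff_maj_pow_pos hm hA hdiag r i j
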